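/- Let a > 0, B > 0, T > 0 and let M : [0,τ) → ℝ be a C¹ function satisfying M'(t) + a M(t) ≥ M(t)²/B for all t ∈ [0,τ). If M(0) > aB/(1 − e^{−aT}), then τ ≤ T; that is, M cannot remain finite (and C¹) on [0,T]. -/
import Mathlib


theorem riccati_blowup_zero_forcing
    (a B T τ : ℝ) (ha : 0 < a) (hB : 0 < B) (hT : 0 < T) (hτ : 0 < τ)
    (M M' : ℝ → ℝ)
    (hM : ∀ t ∈ Set.Ico (0 : ℝ) τ, HasDerivAt M (M' t) t)
    (hineq : ∀ t ∈ Set.Ico (0 : ℝ) τ, M t ^ 2 / B ≤ M' t + a * M t)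
    (h0 : a * B / (1 - Real.exp (-a * T)) < M 0) :
    τ ≤ T := by
  by_contra hcon
  push_neg at hcon
  have hsub : Set.Icc (0:ℝ) T ⊆ Set.Ico 0 τ := fun t ht => ⟨ht.1, lt_of_le_of_lt ht.2 hcon⟩
  have he1 : Real.exp (-a * T) < 1 := by
    rw [Real.exp_lt_one_iff]
    nlinarith
  have hepos : (0:ℝ) < Real.exp (-a * T) := Real.exp_pos _
  have hden : 0 < 1 - Real.exp (-a * T) := by linarith
  have haB : 0 < a * B := mul_pos ha hB
  have hM0big : a * B < M 0 := by
    have h1 : a * B < a * B / (1 - Real.exp (-a * T)) := by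
      rw [lt_div_iff₀ hden]
      nlinarith
    linarith
  -- Step 1: M t > a*B on [0, T]
  have key : ∀ t ∈ Set.Icc (0:ℝ) T, a * B < M t := by
    by_contra hk
    push_neg at hk
    obtain ⟨t₁, ht₁, hMt₁⟩ := hk
    set S := {t | t ∈ Set.Icc (0:ℝ) T ∧ M t ≤ a * B} with hS
    have hSne : S.Nonempty := ⟨t₁, ht₁, hMt₁⟩
    have hSbdd : BddBelow S := ⟨0, fun t ht => ht.1.1⟩
    have hcontM : ContinuousOn M (Set.Icc 0 T) := fun t ht =>
      (hM t (hsub ht)).continuousAt.continuousWithinAt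
    have hSclosed : IsClosed S := by
      have : S = Set.Icc (0:ℝ) T ∩ M ⁻¹' (Set.Iic (a*B)) := by
        ext t; simp [hS, Set.mem_setOf_eq, and_comm]
      rw [this]
      exact hcontM.preimage_isClosed_of_isClosed isClosed_Icc isClosed_Iic
    set t₀ := sInf S with ht₀def
    have ht₀mem : t₀ ∈ S := hSclosed.csInf_mem hSne hSbdd
    have ht₀Icc : t₀ ∈ Set.Icc (0:ℝ) T := ht₀mem.1
    have hMt₀ : M t₀ ≤ a * B := ht₀mem.2
    have ht₀pos : 0 < t₀ := by
      rcases lt_or_eq_of_le ht₀Icc.1 with h | h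
      · exact h
      · exfalso; rw [← h] at hMt₀; linarith
    -- On [0, t₀), M > a*B
    have hbig : ∀ x ∈ Set.Ico (0:ℝ) t₀, a * B < M x := by
      intro x hx
      by_contra hxle
      push_neg at hxle
      have hxS : x ∈ S := ⟨⟨hx.1, le_trans hx.2.le ht₀Icc.2⟩, hxle⟩
      exact absurd (csInf_le hSbdd hxS) (not_le.mpr hx.2)
    -- M is monotone on [0, t₀]
    have hmono : MonotoneOn M (Set.Icc (0:ℝ) t₀) := by
      apply monotoneOn_of_deriv_nonneg (convex_Icc 0 t₀)
      · exact hcontM.mono (Set.Icc_subset_Icc le_rfl ht₀Icc.2)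
      · intro x hx
        rw [interior_Icc] at hx
        have hxIco : x ∈ Set.Ico (0:ℝ) τ :=
          ⟨hx.1.le, lt_of_lt_of_le hx.2 (le_trans ht₀Icc.2 hcon.le)⟩
        exact (hM x hxIco).differentiableAt.differentiableWithinAt
      · intro x hx
        rw [interior_Icc] at hx
        have hxIco : x ∈ Set.Ico (0:ℝ) τ :=
          ⟨hx.1.le, lt_of_lt_of_le hx.2 (le_trans ht₀Icc.2 hcon.le)⟩
        rw [(hM x hxIco).deriv]
        have h1 := hineq x hxIco
        have h1' : M x ^ 2 ≤ (M' x + a * M x) * B := (div_le_iff₀ hB).mp h1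
        have hmx : a * B < M x := hbig x ⟨hx.1.le, hx.2⟩
        have hm0 : 0 < M x := lt_trans haB hmx
        nlinarith [mul_pos (sub_pos.mpr hmx) hm0]
    have : M 0 ≤ M t₀ := hmono ⟨le_rfl, ht₀pos.le⟩ ⟨ht₀pos.le, le_rfl⟩ ht₀pos.le
    linarith
  -- Step 2: the comparison function F is antitone on [0, T]
  set F : ℝ → ℝ := fun t => Real.exp (-a*t) / M t - (Real.exp (-a*t) - 1)/(a*B) with hF
  have hFderiv : ∀ t ∈ Set.Icc (0:ℝ) T,
      HasDerivAt F ((Real.exp (-a*t) * (-a) * M t - Real.exp (-a*t) * M' t) / (M t)^2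
        - (Real.exp (-a*t) * (-a))/(a*B)) t := by
    intro t ht
    have hMne : M t ≠ 0 := ne_of_gt (lt_trans haB (key t ht))
    have he : HasDerivAt (fun s : ℝ => Real.exp (-a*s)) (Real.exp (-a*t) * (-a)) t := by
      have : HasDerivAt (fun s : ℝ => -a*s) (-a) t := by
        simpa using (hasDerivAt_id t).const_mul (-a)
      exact this.exp
    exact (he.div (hM t (hsub ht)) hMne).sub ((he.sub_const 1).div_const (a*B))
  have hFanti : AntitoneOn F (Set.Icc (0:ℝ) T) := by
    apply antitoneOn_of_deriv_nonpos (convex_Icc 0 T)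
    · intro t ht
      exact (hFderiv t ht).continuousAt.continuousWithinAt
    · intro x hx
      rw [interior_Icc] at hx
      exact (hFderiv x ⟨hx.1.le, hx.2.le⟩).differentiableAt.differentiableWithinAt
    · intro x hx
      rw [interior_Icc] at hx
      have hxIcc : x ∈ Set.Icc (0:ℝ) T := ⟨hx.1.le, hx.2.le⟩
      rw [(hFderiv x hxIcc).deriv]
      have h1 := hineq x (hsub hxIcc)
      have h1' : M x ^ 2 ≤ (M' x + a * M x) * B := (div_le_iff₀ hB).mp h1
      have hm : 0 < M x := lt_trans haB (key x hxIcc)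
      have he : (0:ℝ) < Real.exp (-a*x) := Real.exp_pos _
      have h2 : (Real.exp (-a*x) * (-a) * M x - Real.exp (-a*x) * M' x) / (M x)^2
          ≤ (Real.exp (-a*x) * (-a))/(a*B) := by
        rw [div_le_div_iff₀ (pow_pos hm 2) haB]
        nlinarith [mul_le_mul_of_nonneg_left h1' (mul_pos he ha).le]
      linarith
  have hFT : F T ≤ F 0 :=
    hFanti (Set.left_mem_Icc.mpr hT.le) (Set.right_mem_Icc.mpr hT.le) hT.le
  have hF0 : F 0 = 1 / M 0 := by
    simp [hF]
  have hMT : 0 < M T := lt_trans haB (key T (Set.right_mem_Icc.mpr hT.le))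
  have hM0pos : 0 < M 0 := lt_trans haB hM0big
  -- 1 / M 0 < (1 - exp(-aT)) / (aB)
  have h3 : 1 / M 0 < (1 - Real.exp (-a*T)) / (a*B) := by
    rw [div_lt_div_iff₀ hM0pos haB]
    have := (div_lt_iff₀ hden).mp h0
    linarith
  have h4 : 0 < Real.exp (-a*T) / M T := div_pos hepos hMT
  have h5 : (Real.exp (-a*T) - 1)/(a*B) = -((1 - Real.exp (-a*T))/(a*B)) := by ring
  rw [hF0] at hFT
  have hFTval : F T = Real.exp (-a*T) / M T - (Real.exp (-a*T) - 1)/(a*B) := rfl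
  rw [hFTval, h5] at hFT
  linarith
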